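/- arXiv:1209.6487 — 2 statements merged into one kernel-verified Lean document; each statement's English description precedes it below -/
import Mathlib

section
/- Let τ ∈ (0,1) and suppose the real random variables X and Y (on a common probability space) have a joint density with respect to Lebesgue measure on ℝ², EX² < ∞, and E|Y| < ∞. Define h(a,b) = E[ρ_τ(Y − a − bX)] for (a,b) ∈ ℝ². Then h is continuously differentiable on ℝ², with ∂h(a,b)/∂a = P(Y − a − bX < 0) − τ and ∂h(a,b)/∂b = −E[ψ_τ(Y − a − bX)·X]. -/
open MeasureTheory ProbabilityTheory

/-- The check loss `ρ_τ(w) = w (τ - I(w<0))`. -/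
noncomputable def rho (τ w : ℝ) : ℝ := w * (τ - if w < 0 then 1 else 0)

/-- `ψ_τ(w) = τ - I(w<0)`. -/
noncomputable def psi (τ w : ℝ) : ℝ := τ - if w < 0 then 1 else 0

/-! Differentiating `(a, b) ↦ E[ρ_τ(Y − a − bX)]` under the integral is legitimate: `ρ_τ` is
1-Lipschitz, so the difference quotients are dominated by the integrable `‖(1, X)‖`, and `ρ_τ` has
derivative `ψ_τ` off `0`, while `Y − a − bX = 0` only when `(X, Y)` lies on a line, a null event
under the joint density. The gradient `−E[ψ_τ(Y − a − bX) (1, X)]` is continuous by dominated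
convergence, since `ψ_τ` is bounded and, off that null event, locally constant in `(a, b)`. -/

open Topology

section CheckLoss

variable {τ : ℝ}

lemma rho_eq_mul_psi (τ w : ℝ) : rho τ w = w * psi τ w := rfl

lemma measurable_psi (τ : ℝ) : Measurable (psi τ) :=
  measurable_const.sub (Measurable.ite measurableSet_Iio measurable_const measurable_const)

lemma measurable_rho (τ : ℝ) : Measurable (rho τ) :=
  measurable_id.mul (measurable_psi τ)

lemma abs_psi_le_one (hτ : τ ∈ Set.Icc (0 : ℝ) 1) (w : ℝ) : |psi τ w| ≤ 1 := by
  obtain ⟨h0, h1⟩ := hτ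
  unfold psi
  split_ifs <;> rw [abs_le] <;> constructor <;> linarith

lemma lipschitzWith_rho (hτ : τ ∈ Set.Icc (0 : ℝ) 1) : LipschitzWith 1 (rho τ) := by
  refine LipschitzWith.of_dist_le_mul fun w v => ?_
  obtain ⟨h0, h1⟩ := hτ
  rw [NNReal.coe_one, one_mul, Real.dist_eq, Real.dist_eq, abs_le]
  unfold rho
  split_ifs <;> rcases abs_cases (w - v) with ⟨h, h'⟩ | ⟨h, h'⟩ <;> constructor <;> nlinarith

lemma psi_eventuallyEq {w : ℝ} (hw : w ≠ 0) : psi τ =ᶠ[𝓝 w] fun _ => psi τ w := by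
  rcases hw.lt_or_gt with h | h
  · filter_upwards [Iio_mem_nhds h] with v hv
    simp [psi, show v < 0 from hv, h]
  · filter_upwards [Ioi_mem_nhds h] with v hv
    simp [psi, not_lt.2 (show 0 < v from hv).le, not_lt.2 h.le]

lemma hasDerivAt_rho {w : ℝ} (hw : w ≠ 0) : HasDerivAt (rho τ) (psi τ w) w := by
  have hloc : rho τ =ᶠ[𝓝 w] fun v => v * psi τ w :=
    (psi_eventuallyEq hw).mono fun v hv => by rw [rho_eq_mul_psi, hv]
  simpa using (hasDerivAt_mul_const (psi τ w)).congr_of_eventuallyEq hloc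

lemma integral_psi_comp {Ω : Type*} [MeasurableSpace Ω] (P : Measure Ω) [IsProbabilityMeasure P]
    {W : Ω → ℝ} (hW : Measurable W) :
    ∫ ω, psi τ (W ω) ∂P = τ - P.real {ω | W ω < 0} := by
  have hs : MeasurableSet {ω | W ω < 0} := measurableSet_lt hW measurable_const
  have hind : (fun ω => psi τ (W ω)) = fun ω => τ - {ω | W ω < 0}.indicator (fun _ => 1) ω := by
    funext ω
    simp [psi, Set.indicator_apply]
  rw [hind, integral_sub (integrable_const τ) ((integrable_const (1 : ℝ)).indicator hs),
    integral_indicator_const _ hs, integral_const, probReal_univ, one_smul, smul_eq_mul, mul_one]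

end CheckLoss

lemma measure_prod_setOf_snd_eq_zero {α : Type*} [MeasurableSpace α] (μ : Measure α)
    (ν : Measure ℝ) [SFinite ν] [NullSingletonClass ν] {f : α → ℝ} (hf : Measurable f) :
    μ.prod ν {q | q.2 = f q.1} = 0 := by
  have hs : MeasurableSet {q : α × ℝ | q.2 = f q.1} :=
    measurableSet_eq_fun measurable_snd (hf.comp measurable_fst)
  rw [Measure.prod_apply hs]
  simp [Set.preimage]

noncomputable def linearPredictor (x : ℝ) : ℝ × ℝ →L[ℝ] ℝ :=
  ContinuousLinearMap.fst ℝ ℝ ℝ + x • ContinuousLinearMap.snd ℝ ℝ ℝ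

@[simp]
lemma linearPredictor_apply (x : ℝ) (p : ℝ × ℝ) : linearPredictor x p = p.1 + x * p.2 := by
  simp [linearPredictor]

section Regression

variable {Ω : Type _} [MeasurableSpace Ω] {P : Measure Ω} {τ : ℝ} {X Y : Ω → ℝ}

lemma measurable_residual (hX : Measurable X) (hY : Measurable Y) (p : ℝ × ℝ) :
    Measurable fun ω => Y ω - p.1 - p.2 * X ω := by
  fun_prop

lemma ae_residual_ne_zero (hX : Measurable X) (hY : Measurable Y)
    (hjoint : Measure.map (fun ω => (X ω, Y ω)) P ≪ (volume : Measure (ℝ × ℝ))) (p : ℝ × ℝ) :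
    ∀ᵐ ω ∂P, Y ω - p.1 - p.2 * X ω ≠ 0 := by
  have hline : ∀ᵐ q ∂(volume : Measure (ℝ × ℝ)), q.2 - p.1 - p.2 * q.1 ≠ 0 := by
    have := measure_prod_setOf_snd_eq_zero volume volume
      (by fun_prop : Measurable fun x : ℝ => p.1 + p.2 * x)
    rw [ae_iff, Measure.volume_eq_prod]
    simpa [sub_sub, sub_eq_zero] using this
  exact ae_of_ae_map (hX.prodMk hY).aemeasurable (hjoint.ae_le hline)

lemma integrable_linearPredictor_comp [IsFiniteMeasure P] (hX : Integrable X P) :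
    Integrable (fun ω => linearPredictor (X ω)) P :=
  (integrable_const (ContinuousLinearMap.fst ℝ ℝ ℝ)).add (hX.smul_const _)

lemma integral_psi_smul_linearPredictor_apply [IsFiniteMeasure P] (hτ : τ ∈ Set.Icc (0 : ℝ) 1)
    (hX : Measurable X) (hY : Measurable Y) (hXint : Integrable X P) (p v : ℝ × ℝ) :
    (∫ ω, psi τ (Y ω - p.1 - p.2 * X ω) • linearPredictor (X ω) ∂P) v
      = ∫ ω, psi τ (Y ω - p.1 - p.2 * X ω) * (v.1 + X ω * v.2) ∂P := by
  have hL := integrable_linearPredictor_comp (P := P) hXint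
  have hψL : Integrable (fun ω => psi τ (Y ω - p.1 - p.2 * X ω) • linearPredictor (X ω)) P :=
    hL.bdd_smul 1 ((measurable_psi τ).comp (measurable_residual hX hY p)).aestronglyMeasurable
      (ae_of_all _ fun ω => by simpa using abs_psi_le_one hτ _)
  exact (ContinuousLinearMap.integral_apply hψL v).trans (by simp)

lemma continuous_integral_psi_smul {E : Type*} [NormedAddCommGroup E] [NormedSpace ℝ E]
    (hτ : τ ∈ Set.Icc (0 : ℝ) 1) (hX : Measurable X) (hY : Measurable Y)
    (hjoint : Measure.map (fun ω => (X ω, Y ω)) P ≪ (volume : Measure (ℝ × ℝ)))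
    {G : Ω → E} (hG : Integrable G P) :
    Continuous fun p : ℝ × ℝ => ∫ ω, psi τ (Y ω - p.1 - p.2 * X ω) • G ω ∂P := by
  refine continuous_iff_continuousAt.2 fun p₀ => continuousAt_of_dominated
    (Filter.Eventually.of_forall fun p =>
      ((measurable_psi τ).comp (measurable_residual hX hY p)).aestronglyMeasurable.smul hG.1)
    (Filter.Eventually.of_forall fun p => ae_of_all _ fun ω => ?_) hG.norm ?_
  · rw [norm_smul, Real.norm_eq_abs]
    exact mul_le_of_le_one_left (norm_nonneg _) (abs_psi_le_one hτ _)
  · filter_upwards [ae_residual_ne_zero hX hY hjoint p₀] with ω hω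
    have hres : Continuous fun p : ℝ × ℝ => Y ω - p.1 - p.2 * X ω := by fun_prop
    exact ((psi_eventuallyEq hω).continuousAt.comp (f := fun p : ℝ × ℝ => Y ω - p.1 - p.2 * X ω)
      hres.continuousAt).smul continuousAt_const

lemma hasFDerivAt_integral_rho [IsFiniteMeasure P] (hτ : τ ∈ Set.Icc (0 : ℝ) 1)
    (hX : Measurable X) (hY : Measurable Y)
    (hjoint : Measure.map (fun ω => (X ω, Y ω)) P ≪ (volume : Measure (ℝ × ℝ)))
    (hXint : Integrable X P) (hYint : Integrable Y P) (p₀ : ℝ × ℝ) :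
    HasFDerivAt (fun p : ℝ × ℝ => ∫ ω, rho τ (Y ω - p.1 - p.2 * X ω) ∂P)
      (-∫ ω, psi τ (Y ω - p₀.1 - p₀.2 * X ω) • linearPredictor (X ω) ∂P) p₀ := by
  have hL := integrable_linearPredictor_comp (P := P) hXint
  have hres (p : ℝ × ℝ) (ω : Ω) : Y ω - p.1 - p.2 * X ω = Y ω - linearPredictor (X ω) p := by
    simp only [linearPredictor_apply]; ring
  rw [← integral_neg]
  refine (hasFDerivAt_integral_of_dominated_loc_of_lip' (bound := fun ω => ‖linearPredictor (X ω)‖)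
    Filter.univ_mem (fun p _ => ((measurable_rho τ).comp
      (measurable_residual hX hY p)).aestronglyMeasurable) ?_ ?_ ?_ hL.norm ?_).2
  · have hres_int : Integrable (fun ω => Y ω - p₀.1 - p₀.2 * X ω) P :=
      (hYint.sub (integrable_const _)).sub (hXint.const_mul _)
    refine hres_int.norm.mono' ((measurable_rho τ).comp
      (measurable_residual hX hY p₀)).aestronglyMeasurable (ae_of_all _ fun ω => ?_)
    simpa [show rho τ 0 = 0 by simp [rho]] using (lipschitzWith_rho hτ).dist_le_mul
      (Y ω - p₀.1 - p₀.2 * X ω) 0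
  · exact (((measurable_psi τ).comp (measurable_residual hX hY p₀)).aestronglyMeasurable.smul
      hL.1).neg
  · refine ae_of_all _ fun ω p _ => ?_
    calc ‖rho τ (Y ω - p.1 - p.2 * X ω) - rho τ (Y ω - p₀.1 - p₀.2 * X ω)‖
        ≤ ‖(Y ω - p.1 - p.2 * X ω) - (Y ω - p₀.1 - p₀.2 * X ω)‖ := by
          simpa using (lipschitzWith_rho hτ).norm_sub_le _ _
      _ = ‖linearPredictor (X ω) (p - p₀)‖ := by
          rw [hres, hres, map_sub, sub_sub_sub_cancel_left, norm_sub_rev]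
      _ ≤ ‖linearPredictor (X ω)‖ * ‖p - p₀‖ := (linearPredictor (X ω)).le_opNorm _
  · filter_upwards [ae_residual_ne_zero hX hY hjoint p₀] with ω hω
    simp_rw [hres] at hω ⊢
    exact ((hasDerivAt_rho hω).comp_hasFDerivAt p₀
      ((linearPredictor (X ω)).hasFDerivAt.const_sub (Y ω))).congr_fderiv (smul_neg _ _)

end Regression

/-- If `(X, Y)` has a joint density with respect to Lebesgue measure on `ℝ²`,
`EX² < ∞` and `E|Y| < ∞`, then `h(a,b) = E[ρ_τ(Y − a − bX)]` is continuously
differentiable with `∂h/∂a = P(Y − a − bX < 0) − τ` and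
`∂h/∂b = −E[ψ_τ(Y − a − bX) X]`. -/
theorem stmt2 {Ω : Type*} [MeasurableSpace Ω] (P : Measure Ω) [IsProbabilityMeasure P]
    (τ : ℝ) (hτ : τ ∈ Set.Ioo (0 : ℝ) 1)
    (X Y : Ω → ℝ) (hX : Measurable X) (hY : Measurable Y)
    (hjoint : Measure.map (fun ω => (X ω, Y ω)) P ≪ (volume : Measure (ℝ × ℝ)))
    (hX2 : Integrable (fun ω => (X ω) ^ 2) P) (hY1 : Integrable Y P) :
    ContDiff ℝ 1 (fun p : ℝ × ℝ => ∫ ω, rho τ (Y ω - p.1 - p.2 * X ω) ∂P) ∧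
    (∀ a b : ℝ, HasDerivAt (fun a' : ℝ => ∫ ω, rho τ (Y ω - a' - b * X ω) ∂P)
      ((P {ω | Y ω - a - b * X ω < 0}).toReal - τ) a) ∧
    (∀ a b : ℝ, HasDerivAt (fun b' : ℝ => ∫ ω, rho τ (Y ω - a - b' * X ω) ∂P)
      (-∫ ω, psi τ (Y ω - a - b * X ω) * X ω ∂P) b) := by
  have hτ' : τ ∈ Set.Icc (0 : ℝ) 1 := Set.Ioo_subset_Icc_self hτ
  have hXint : Integrable X P :=
    ((memLp_two_iff_integrable_sq hX.aestronglyMeasurable).2 hX2).integrable one_le_two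
  have hD := hasFDerivAt_integral_rho hτ' hX hY hjoint hXint hY1
  refine ⟨contDiff_one_iff_fderiv.2 ⟨fun p => (hD p).differentiableAt, ?_⟩, fun a b => ?_,
    fun a b => ?_⟩
  · rw [funext fun p => (hD p).fderiv]
    exact (continuous_integral_psi_smul hτ' hX hY hjoint
      (integrable_linearPredictor_comp hXint)).neg
  · refine ((hD (a, b)).comp_hasDerivAt a
      ((hasDerivAt_id a).prodMk (hasDerivAt_const a b))).congr_deriv ?_
    rw [neg_apply, integral_psi_smul_linearPredictor_apply hτ' hX hY hXint]
    simp [integral_psi_comp P (measurable_residual hX hY (a, b)), measureReal_def]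
  · refine ((hD (a, b)).comp_hasDerivAt b
      ((hasDerivAt_const b a).prodMk (hasDerivAt_id b))).congr_deriv ?_
    rw [neg_apply, integral_psi_smul_linearPredictor_apply hτ' hX hY hXint]
    simp
end

section
/- Let τ ∈ (0,1) and suppose the real random variables X and Y have a joint density with respect to Lebesgue measure on ℝ², EX² < ∞, and E|Y| < ∞. Then the function h(a,b) = E[ρ_τ(Y − a − bX)] is convex on ℝ² and h(a,b) → +∞ as a² + b² → ∞. -/
/-! `ρ_τ(w) = max (τ w) ((τ - 1) w)` is convex, so `h` is an integral of convex functions of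
`(a, b)`. For coercivity, `ρ_τ(w) ≥ min τ (1 - τ) * |w|` gives
`h(a, b) ≥ min τ (1 - τ) * (E|a + bX| - E|Y|)`. Since `X` has a density it is not a.s. constant,
so `(a, b) ↦ E|a + bX|` is a norm on `ℝ²`; by compactness of the unit sphere it dominates a
positive multiple of `‖(a, b)‖`. -/

open MeasureTheory ProbabilityTheory Filter

theorem rho_eq_max (τ w : ℝ) : rho τ w = max (τ * w) ((τ - 1) * w) := by
  rcases lt_or_ge w 0 with hw | hw
  · rw [rho, if_pos hw, max_eq_right (by nlinarith)]; ring
  · rw [rho, if_neg (not_lt.2 hw), max_eq_left (by nlinarith)]; ring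

theorem convexOn_rho (τ : ℝ) : ConvexOn ℝ Set.univ (rho τ) := by
  rw [funext (rho_eq_max τ)]
  exact (LinearMap.mul ℝ ℝ τ).convexOn convex_univ |>.sup
    ((LinearMap.mul ℝ ℝ (τ - 1)).convexOn convex_univ)

theorem min_mul_abs_le_rho (τ w : ℝ) : min τ (1 - τ) * |w| ≤ rho τ w := by
  rw [rho_eq_max]
  rcases lt_or_ge w 0 with hw | hw
  · rw [abs_of_neg hw]
    nlinarith [min_le_right τ (1 - τ), le_max_right (τ * w) ((τ - 1) * w)]
  · rw [abs_of_nonneg hw]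
    nlinarith [min_le_left τ (1 - τ), le_max_left (τ * w) ((τ - 1) * w)]

theorem MeasureTheory.Integrable.rho_comp {Ω : Type*} [MeasurableSpace Ω] {μ : Measure Ω}
    {f : Ω → ℝ} (hf : Integrable f μ) (τ : ℝ) : Integrable (fun ω => rho τ (f ω)) μ := by
  simp_rw [rho_eq_max]
  exact (hf.const_mul τ).sup (hf.const_mul (τ - 1))

theorem convexOn_integral {E Ω : Type*} [AddCommGroup E] [Module ℝ E] [MeasurableSpace Ω]
    {μ : Measure Ω} {s : Set E} (hs : Convex ℝ s) {f : E → Ω → ℝ}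
    (hint : ∀ p ∈ s, Integrable (f p) μ) (hf : ∀ ω, ConvexOn ℝ s (f · ω)) :
    ConvexOn ℝ s fun p => ∫ ω, f p ω ∂μ := by
  refine ⟨hs, fun p hp q hq a b ha hb hab => ?_⟩
  calc ∫ ω, f (a • p + b • q) ω ∂μ ≤ ∫ ω, (a * f p ω + b * f q ω) ∂μ :=
        integral_mono (hint _ (hs hp hq ha hb hab))
          (((hint p hp).const_mul a).add ((hint q hq).const_mul b))
          fun ω => (hf ω).2 hp hq ha hb hab
    _ = a • ∫ ω, f p ω ∂μ + b • ∫ ω, f q ω ∂μ := by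
        rw [integral_add ((hint p hp).const_mul a) ((hint q hq).const_mul b),
          integral_const_mul, integral_const_mul, smul_eq_mul, smul_eq_mul]

theorem ConvexOn.comp_sub_add_mul {φ : ℝ → ℝ} (hφ : ConvexOn ℝ Set.univ φ) (x y : ℝ) :
    ConvexOn ℝ Set.univ fun p : ℝ × ℝ => φ (y - p.1 - p.2 * x) := by
  let g : ℝ × ℝ →ᵃ[ℝ] ℝ :=
    AffineMap.const ℝ (ℝ × ℝ) y - (LinearMap.fst ℝ ℝ ℝ + x • LinearMap.snd ℝ ℝ ℝ).toAffineMap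
  have hg : (fun p : ℝ × ℝ => φ (y - p.1 - p.2 * x)) = φ ∘ g := by
    funext p
    simp [g, mul_comm, sub_sub]
  simpa [hg] using hφ.comp_affineMap g

theorem exists_pos_mul_norm_le_of_homogeneous {E : Type*} [NormedAddCommGroup E]
    [NormedSpace ℝ E] [ProperSpace E] [Nontrivial E] {g : E → ℝ}
    (hcont : ContinuousOn g (Metric.sphere 0 1)) (hpos : ∀ p ∈ Metric.sphere (0 : E) 1, 0 < g p)
    (hhom : ∀ (t : ℝ) (p : E), 0 ≤ t → g (t • p) = t * g p) :
    ∃ k > 0, ∀ p, k * ‖p‖ ≤ g p := by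
  obtain ⟨p₀, hp₀, hmin⟩ := (isCompact_sphere (0 : E) 1).exists_isMinOn
    (NormedSpace.sphere_nonempty.2 zero_le_one) hcont
  refine ⟨g p₀, hpos p₀ hp₀, fun p => ?_⟩
  rcases eq_or_ne p 0 with rfl | hp
  · simp [show g 0 = 0 by simpa using hhom 0 0 le_rfl]
  · have hu : ‖p‖⁻¹ • p ∈ Metric.sphere (0 : E) 1 := by simp [norm_smul, hp]
    calc g p₀ * ‖p‖ ≤ g (‖p‖⁻¹ • p) * ‖p‖ :=
          mul_le_mul_of_nonneg_right (hmin hu) (norm_nonneg p)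
      _ = g p := by
        rw [mul_comm, ← hhom _ _ (norm_nonneg p), smul_inv_smul₀ (norm_ne_zero_iff.2 hp)]

section

variable {Ω : Type*} [MeasurableSpace Ω] {P : Measure Ω} {X : Ω → ℝ}

theorem integral_abs_add_mul_pos [IsFiniteMeasure P] [NeZero P] (hX : Integrable X P)
    (hnc : ∀ c, ¬ X =ᵐ[P] fun _ => c) {p : ℝ × ℝ} (hp : p ≠ 0) :
    0 < ∫ ω, |p.1 + p.2 * X ω| ∂P := by
  refine (integral_nonneg fun _ => abs_nonneg _).lt_of_ne' fun h0 => ?_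
  have hae : ∀ᵐ ω ∂P, p.1 + p.2 * X ω = 0 := by
    filter_upwards [(integral_eq_zero_iff_of_nonneg (fun _ => abs_nonneg _)
      ((integrable_const p.1).add (hX.const_mul p.2)).abs).1 h0] with ω hω
    simpa using hω
  rcases eq_or_ne p.2 0 with hb | hb
  · obtain ⟨ω, hω⟩ := hae.exists
    exact hp (Prod.ext (by simpa [hb] using hω) hb)
  · refine hnc (-p.1 / p.2) ?_
    filter_upwards [hae] with ω hω
    field_simp
    linarith

theorem exists_pos_mul_norm_le_integral_abs_add_mul [IsFiniteMeasure P] [NeZero P]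
    (hX : Integrable X P) (hnc : ∀ c, ¬ X =ᵐ[P] fun _ => c) :
    ∃ k > 0, ∀ p : ℝ × ℝ, k * ‖p‖ ≤ ∫ ω, |p.1 + p.2 * X ω| ∂P := by
  refine exists_pos_mul_norm_le_of_homogeneous ?_
    (fun p hp => integral_abs_add_mul_pos hX hnc (ne_zero_of_mem_unit_sphere ⟨p, hp⟩)) ?_
  · refine continuousOn_of_dominated (bound := fun ω => 1 + |X ω|)
      (fun p _ => ((integrable_const p.1).add (hX.const_mul p.2)).abs.aestronglyMeasurable)
      (fun p hp => ae_of_all _ fun ω => ?_) ((integrable_const 1).add hX.abs)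
      (ae_of_all _ fun ω => by fun_prop)
    have h1 : |p.1| ≤ 1 := (norm_fst_le p).trans (mem_sphere_zero_iff_norm.1 hp).le
    have h2 : |p.2| ≤ 1 := (norm_snd_le p).trans (mem_sphere_zero_iff_norm.1 hp).le
    calc ‖|p.1 + p.2 * X ω|‖ ≤ |p.1| + |p.2| * |X ω| := by
          rw [Real.norm_eq_abs, abs_abs, ← abs_mul]; exact abs_add_le _ _
      _ ≤ 1 + |X ω| := by gcongr; nlinarith [abs_nonneg (X ω)]
  · intro t p ht
    rw [← integral_const_mul]
    congr 1 with ω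
    rw [Prod.smul_fst, Prod.smul_snd, smul_eq_mul, smul_eq_mul, ← abs_of_nonneg ht, ← abs_mul,
      abs_of_nonneg ht]
    ring_nf

end

theorem absolutelyContinuous_map_of_map_prod {Ω α β : Type*} [MeasurableSpace Ω]
    [MeasureSpace α] [MeasureSpace β] [SFinite (volume : Measure β)] {P : Measure Ω}
    {X : Ω → α} {Y : Ω → β}
    (hX : AEMeasurable X P) (hY : AEMeasurable Y P)
    (h : P.map (fun ω => (X ω, Y ω)) ≪ volume) : P.map X ≪ volume := by
  have hfst : P.map X = (P.map fun ω => (X ω, Y ω)).map Prod.fst := by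
    rw [AEMeasurable.map_map_of_aemeasurable measurable_fst.aemeasurable (hX.prodMk hY)]
    rfl
  rw [hfst]
  refine (h.map measurable_fst).trans ?_
  rw [Measure.volume_eq_prod, Measure.map_fst_prod]
  exact Measure.smul_absolutelyContinuous

theorem not_ae_eq_const_of_map_absolutelyContinuous {Ω α : Type*} [MeasurableSpace Ω]
    [MeasurableSpace α] [MeasurableSingletonClass α] {P : Measure Ω} [NeZero P] {ν : Measure α}
    [NullSingletonClass ν] {X : Ω → α} (hX : AEMeasurable X P) (h : P.map X ≪ ν) (c : α) :
    ¬ X =ᵐ[P] fun _ => c := by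
  intro hc
  have hnull : P (X ⁻¹' {c}) = 0 := by
    rw [← Measure.map_apply_of_aemeasurable hX (measurableSet_singleton c)]
    exact h (measure_singleton c)
  obtain ⟨ω, hω, hω'⟩ := (hc.and (measure_eq_zero_iff_ae_notMem.1 hnull)).exists
  exact hω' hω

theorem tendsto_norm_comap_sq_add_sq :
    Tendsto (fun p : ℝ × ℝ => ‖p‖) (comap (fun p : ℝ × ℝ => p.1 ^ 2 + p.2 ^ 2) atTop) atTop := by
  refine tendsto_atTop.2 fun R => ?_
  filter_upwards [tendsto_comap.eventually (eventually_ge_atTop (2 * R ^ 2))] with p hp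
  have h1 : p.1 ^ 2 ≤ ‖p‖ ^ 2 := by rw [← sq_abs]; gcongr; exact norm_fst_le p
  have h2 : p.2 ^ 2 ≤ ‖p‖ ^ 2 := by rw [← sq_abs]; gcongr; exact norm_snd_le p
  exact (le_abs_self R).trans (abs_le_of_sq_le_sq (by linarith) (norm_nonneg p))

theorem min_mul_sub_le_integral_rho_sub {Ω : Type*} [MeasurableSpace Ω] {P : Measure Ω}
    {τ : ℝ} (hτ : τ ∈ Set.Icc (0 : ℝ) 1) {f g : Ω → ℝ} (hf : Integrable f P)
    (hg : Integrable g P) :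
    min τ (1 - τ) * (∫ ω, |f ω| ∂P - ∫ ω, |g ω| ∂P) ≤ ∫ ω, rho τ (g ω - f ω) ∂P := by
  have hm : 0 ≤ min τ (1 - τ) := le_min hτ.1 (sub_nonneg.2 hτ.2)
  have hgf : Integrable (fun ω => |g ω - f ω|) P := (hg.sub hf).abs
  have htri : ∫ ω, |f ω| ∂P - ∫ ω, |g ω| ∂P ≤ ∫ ω, |g ω - f ω| ∂P := by
    rw [sub_le_iff_le_add, ← integral_add hgf hg.abs]
    exact integral_mono hf.abs (hgf.add hg.abs) fun ω => by
      linarith [abs_sub_abs_le_abs_sub (f ω) (g ω), abs_sub_comm (f ω) (g ω)]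
  calc min τ (1 - τ) * (∫ ω, |f ω| ∂P - ∫ ω, |g ω| ∂P)
      ≤ ∫ ω, min τ (1 - τ) * |g ω - f ω| ∂P := by
        rw [integral_const_mul]; exact mul_le_mul_of_nonneg_left htri hm
    _ ≤ ∫ ω, rho τ (g ω - f ω) ∂P :=
        integral_mono (hgf.const_mul _) ((hg.sub hf).rho_comp τ)
          fun ω => min_mul_abs_le_rho τ _

theorem stmt4_general {Ω : Type*} [MeasurableSpace Ω] (P : Measure Ω) [IsProbabilityMeasure P]
    (τ : ℝ) (hτ : τ ∈ Set.Ioo (0 : ℝ) 1)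
    (X Y : Ω → ℝ) (hX : Measurable X)
    (hjoint : Measure.map (fun ω => (X ω, Y ω)) P ≪ (volume : Measure (ℝ × ℝ)))
    (hX2 : Integrable (fun ω => (X ω) ^ 2) P) (hY1 : Integrable Y P) :
    ConvexOn ℝ Set.univ (fun p : ℝ × ℝ => ∫ ω, rho τ (Y ω - p.1 - p.2 * X ω) ∂P) ∧
    Tendsto (fun p : ℝ × ℝ => ∫ ω, rho τ (Y ω - p.1 - p.2 * X ω) ∂P)
      (Filter.comap (fun p : ℝ × ℝ => p.1 ^ 2 + p.2 ^ 2) atTop) atTop := by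
  have hXint : Integrable X P :=
    ((memLp_two_iff_integrable_sq hX.aestronglyMeasurable).2 hX2).integrable one_le_two
  have hline : ∀ p : ℝ × ℝ, Integrable (fun ω => p.1 + p.2 * X ω) P := fun p =>
    (integrable_const p.1).add (hXint.const_mul p.2)
  have hres : ∀ p : ℝ × ℝ, Integrable (fun ω => Y ω - p.1 - p.2 * X ω) P := fun p =>
    (hY1.sub (integrable_const p.1)).sub (hXint.const_mul p.2)
  refine ⟨convexOn_integral convex_univ (fun p _ => (hres p).rho_comp τ)
    fun ω => (convexOn_rho τ).comp_sub_add_mul (X ω) (Y ω), ?_⟩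
  have hnc := not_ae_eq_const_of_map_absolutelyContinuous hX.aemeasurable
    (absolutelyContinuous_map_of_map_prod hX.aemeasurable hY1.aemeasurable hjoint)
  obtain ⟨k, hk, hkX⟩ := exists_pos_mul_norm_le_integral_abs_add_mul hXint hnc
  have hm : 0 < min τ (1 - τ) := lt_min hτ.1 (sub_pos.2 hτ.2)
  have hlower : ∀ p : ℝ × ℝ, min τ (1 - τ) * (k * ‖p‖ - ∫ ω, |Y ω| ∂P) ≤
      ∫ ω, rho τ (Y ω - p.1 - p.2 * X ω) ∂P := fun p => by
    simpa only [sub_sub] using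
      (mul_le_mul_of_nonneg_left (sub_le_sub_right (hkX p) _) hm.le).trans
        (min_mul_sub_le_integral_rho_sub (Set.Ioo_subset_Icc_self hτ) (hline p) hY1)
  refine tendsto_atTop_mono hlower (Tendsto.const_mul_atTop hm ?_)
  simpa only [sub_eq_add_neg] using
    tendsto_atTop_add_const_right _ _ (tendsto_norm_comap_sq_add_sq.const_mul_atTop hk)

/-- If `(X, Y)` has a joint density, `EX² < ∞` and `E|Y| < ∞`, then
`h(a,b) = E[ρ_τ(Y − a − bX)]` is convex on `ℝ²` and `h(a,b) → ∞` as `a² + b² → ∞`. -/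
theorem stmt4 {Ω : Type*} [MeasurableSpace Ω] (P : Measure Ω) [IsProbabilityMeasure P]
    (τ : ℝ) (hτ : τ ∈ Set.Ioo (0 : ℝ) 1)
    (X Y : Ω → ℝ) (hX : Measurable X) (hY : Measurable Y)
    (hjoint : Measure.map (fun ω => (X ω, Y ω)) P ≪ (volume : Measure (ℝ × ℝ)))
    (hX2 : Integrable (fun ω => (X ω) ^ 2) P) (hY1 : Integrable Y P) :
    ConvexOn ℝ Set.univ (fun p : ℝ × ℝ => ∫ ω, rho τ (Y ω - p.1 - p.2 * X ω) ∂P) ∧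
    Tendsto (fun p : ℝ × ℝ => ∫ ω, rho τ (Y ω - p.1 - p.2 * X ω) ∂P)
      (Filter.comap (fun p : ℝ × ℝ => p.1 ^ 2 + p.2 ^ 2) atTop) atTop :=
  stmt4_general P τ hτ X Y hX hjoint hX2 hY1
end
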